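/- Let G be a fork-free graph containing an induced odd cycle H of length at least 7 and a vertex u outside H that has at least three neighbors on H, not all neighbors on H, and is adjacent to v4 but not v5 (for some numbering v1,...,v_ℓ of H). Then u is adjacent to v3. -/

import Mathlib

open SimpleGraph

/-- `v` enumerates the vertices of an induced cycle of length `n` in `G`:
`v` is injective and two listed vertices are adjacent iff they are consecutive. -/
def IsInducedCycle {V : Type*} (G : SimpleGraph V) (n : ℕ) (v : ZMod n → V) : Prop :=
  3 ≤ n ∧ Function.Injective v ∧
    ∀ i j : ZMod n, G.Adj (v i) (v j) ↔ (j = i + 1 ∨ i = j + 1)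

/-- An odd hole: an induced odd cycle of length at least 5. -/
def IsOddHole {V : Type*} (G : SimpleGraph V) (n : ℕ) (v : ZMod n → V) : Prop :=
  5 ≤ n ∧ Odd n ∧ IsInducedCycle G n v

/-- `G` contains an induced fork (chair): the tree on `{c,x,y,z,w}` with
edges `cx, cy, cz, zw`. -/
def HasInducedFork {V : Type*} (G : SimpleGraph V) : Prop :=
  ∃ c x y z w : V, ([c, x, y, z, w] : List V).Nodup ∧
    G.Adj c x ∧ G.Adj c y ∧ G.Adj c z ∧ G.Adj z w ∧
    ¬G.Adj x y ∧ ¬G.Adj x z ∧ ¬G.Adj y z ∧ ¬G.Adj c w ∧ ¬G.Adj x w ∧ ¬G.Adj y w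

/-- `G` contains an induced claw `K_{1,3}`. -/
def HasInducedClaw {V : Type*} (G : SimpleGraph V) : Prop :=
  ∃ c x y z : V, ([c, x, y, z] : List V).Nodup ∧
    G.Adj c x ∧ G.Adj c y ∧ G.Adj c z ∧ ¬G.Adj x y ∧ ¬G.Adj x z ∧ ¬G.Adj y z

/-- `G` contains an induced `W₅`: an induced 5-cycle plus a vertex adjacent to
all five cycle vertices. -/
def HasInducedW5 {V : Type*} (G : SimpleGraph V) : Prop :=
  ∃ (u : ZMod 5 → V) (h : V), Function.Injective u ∧ (∀ i, h ≠ u i) ∧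
    (∀ i j : ZMod 5, G.Adj (u i) (u j) ↔ (j = i + 1 ∨ i = j + 1)) ∧
    ∀ i, G.Adj h (u i)

/-- `S` is an independent set of `G`. -/
def IsIS {V : Type*} (G : SimpleGraph V) (S : Set V) : Prop :=
  ∀ ⦃a⦄, a ∈ S → ∀ ⦃b⦄, b ∈ S → ¬G.Adj a b

/-- `S` is a maximal independent set of `G`. -/
def MaxIS {V : Type*} (G : SimpleGraph V) (S : Set V) : Prop :=
  IsIS G S ∧ ∀ T, IsIS G T → S ⊆ T → T = S

/-- A vertex `u` outside an (induced) 5-cycle `v` has either exactly two consecutive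
neighbors on the cycle, or exactly three neighbors that are not three consecutive
vertices (the only such pattern on a 5-cycle being `{i, i+1, i+3}`). -/
def GoodAttach {V : Type*} (G : SimpleGraph V) (v : ZMod 5 → V) (u : V) : Prop :=
  (∃ i : ZMod 5, ∀ k, G.Adj u (v k) ↔ (k = i ∨ k = i + 1)) ∨
  (∃ i : ZMod 5, ∀ k, G.Adj u (v k) ↔ (k = i ∨ k = i + 1 ∨ k = i + 3))

/-- `U_i`: the vertices outside the 5-cycle adjacent to both `v_{i+2}` and `v_{i+3}`. -/
def Uset {V : Type*} (G : SimpleGraph V) (v : ZMod 5 → V) (i : ZMod 5) : Set V :=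
  {u | u ∉ Set.range v ∧ G.Adj u (v (i + 2)) ∧ G.Adj u (v (i + 3))}

/-- `U_i⁺ = U_i ∩ N(v_i)`. -/
def UsetP {V : Type*} (G : SimpleGraph V) (v : ZMod 5 → V) (i : ZMod 5) : Set V :=
  {u | u ∈ Uset G v i ∧ G.Adj u (v i)}

/-- `U_i⁻ = U_i \ N(v_i)`. -/
def UsetM {V : Type*} (G : SimpleGraph V) (v : ZMod 5 → V) (i : ZMod 5) : Set V :=
  {u | u ∈ Uset G v i ∧ ¬G.Adj u (v i)}

/-!
Suppose `u` misses `v3`, and write `c; x, y, z - w` for the fork with centre `c` and edge `zw`.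
Fork-freeness then forces `u` onto more and more of the cycle: `u ~ v2` (else `v4; u, v5, v3 - v2`
is a fork), `u ~ v6` (else `v4; u, v3, v5 - v6`), `u ~ v7` (else `u; v2, v4, v6 - v7`), and finally
`u; v2, v7, v4 - v5` is a fork. Only the induced path `v2 … v7` is involved; it exists because the
cycle has length at least 7.
-/

section

variable {V : Type*} {G : SimpleGraph V}

theorem hasInducedFork_of_adj {c x y z w : V} (hxy : x ≠ y) (hxz : x ≠ z) (hyz : y ≠ z)
    (hcw : c ≠ w) (hcx : G.Adj c x) (hcy : G.Adj c y) (hcz : G.Adj c z) (hzw : G.Adj z w)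
    (nxy : ¬G.Adj x y) (nxz : ¬G.Adj x z) (nyz : ¬G.Adj y z) (ncw : ¬G.Adj c w)
    (nxw : ¬G.Adj x w) (nyw : ¬G.Adj y w) : HasInducedFork G := by
  refine ⟨c, x, y, z, w, ?_, hcx, hcy, hcz, hzw, nxy, nxz, nyz, ncw, nxw, nyw⟩
  have hxw : x ≠ w := by rintro rfl; exact ncw hcx
  have hyw : y ≠ w := by rintro rfl; exact ncw hcy
  simp only [List.nodup_cons, List.mem_cons, List.not_mem_nil, List.nodup_nil, or_false,
    not_or, and_true]
  exact ⟨⟨hcx.ne, hcy.ne, hcz.ne, hcw⟩, ⟨hxy, hxz, hxw⟩, ⟨hyz, hyw⟩, hzw.ne, not_false⟩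

theorem ZMod.natCast_inj_of_lt {n a b : ℕ} (ha : a < n) (hb : b < n) :
    (a : ZMod n) = b ↔ a = b := by
  rw [ZMod.natCast_eq_natCast_iff', Nat.mod_eq_of_lt ha, Nat.mod_eq_of_lt hb]

def IsInducedCycle.embeddingPathGraph {n m : ℕ} {v : ZMod n → V} (hH : IsInducedCycle G n v)
    (s : ZMod n) (hm : m < n) : pathGraph m ↪g G where
  toFun i := v (s + (i : ℕ))
  inj' i j h := Fin.ext <| (ZMod.natCast_inj_of_lt (i.2.trans hm) (j.2.trans hm)).mp <|
    add_left_cancel (hH.2.1 h)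
  map_rel_iff' {i j} := by
    have cast_eq {a b : Fin m} : ((a : ℕ) : ZMod n) = (b : ℕ) + 1 ↔ (a : ℕ) = b + 1 := by
      rw [← Nat.cast_succ]
      exact ZMod.natCast_inj_of_lt (a.2.trans hm) (by omega)
    change G.Adj (v (s + (i : ℕ))) (v (s + (j : ℕ))) ↔ _
    rw [hH.2.2, pathGraph_adj, add_assoc, add_assoc, add_right_inj, add_right_inj, cast_eq,
      cast_eq]
    omega

theorem adj_one_of_embedding_pathGraph (hfork : ¬HasInducedFork G) (p : pathGraph 6 ↪g G)
    {u : V} (hu : u ∉ Set.range p) (h2 : G.Adj u (p 2)) (h3 : ¬G.Adj u (p 3)) :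
    G.Adj u (p 1) := by
  have adj {i j : Fin 6} (h : (i : ℕ) + 1 = j ∨ (j : ℕ) + 1 = i := by decide) :
      G.Adj (p i) (p j) := by
    rwa [p.map_adj_iff, pathGraph_adj]
  have nadj {i j : Fin 6} (h : (i : ℕ) + 1 ≠ j ∧ (j : ℕ) + 1 ≠ i := by decide) :
      ¬G.Adj (p i) (p j) := by
    rw [p.map_adj_iff, pathGraph_adj]; omega
  have ne {i j : Fin 6} (h : i ≠ j := by decide) : p i ≠ p j := p.injective.ne h
  have hu' (i : Fin 6) : u ≠ p i := fun h => hu ⟨i, h.symm⟩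
  by_contra h1
  have h0 : G.Adj u (p 0) := by
    by_contra h0
    exact hfork <| hasInducedFork_of_adj (hu' 3) (hu' 1) ne ne h2.symm adj adj adj
      h3 h1 nadj nadj h0 nadj
  have h4 : G.Adj u (p 4) := by
    by_contra h4
    exact hfork <| hasInducedFork_of_adj (hu' 1) (hu' 3) ne ne h2.symm adj adj adj
      h1 h3 nadj nadj h4 nadj
  have h5 : G.Adj u (p 5) := by
    by_contra h5
    exact hfork <| hasInducedFork_of_adj ne ne ne (hu' 5) h0 h2 h4 adj nadj nadj nadj h5 nadj nadj
  exact hfork <| hasInducedFork_of_adj ne ne ne (hu' 3) h0 h5 h2 adj nadj nadj nadj h3 nadj nadj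

end

theorem stmt17_general {V : Type*} (G : SimpleGraph V) (hfork : ¬HasInducedFork G)
    (n : ℕ) (hn : 7 ≤ n)
    (v : ZMod n → V) (hH : IsInducedCycle G n v)
    (u : V) (hu : u ∉ Set.range v)
    (h4 : G.Adj u (v 4)) (h5 : ¬G.Adj u (v 5)) :
    G.Adj u (v 3) := by
  let p := hH.embeddingPathGraph 2 (m := 6) (by omega)
  have hp (k : Fin 6) (c : ZMod n) (hc : 2 + ((k : ℕ) : ZMod n) = c) : p k = v c := hc ▸ rfl
  have h := adj_one_of_embedding_pathGraph hfork p (u := u) (fun ⟨i, hi⟩ => hu ⟨_, hi⟩)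
  rw [hp 1 3 (by norm_num), hp 2 4 (by norm_num), hp 3 5 (by norm_num)] at h
  exact h h4 h5

theorem stmt17 {V : Type*} (G : SimpleGraph V) (hfork : ¬HasInducedFork G)
    (n : ℕ) (hn : 7 ≤ n) (hodd : Odd n)
    (v : ZMod n → V) (hH : IsInducedCycle G n v)
    (u : V) (hu : u ∉ Set.range v)
    (h3 : ∃ i j k : ZMod n, i ≠ j ∧ i ≠ k ∧ j ≠ k ∧
      G.Adj u (v i) ∧ G.Adj u (v j) ∧ G.Adj u (v k))
    (hnotall : ∃ i, ¬G.Adj u (v i))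
    (h4 : G.Adj u (v 4)) (h5 : ¬G.Adj u (v 5)) :
    G.Adj u (v 3) :=
  stmt17_general G hfork n hn v hH u hu h4 h5
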